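/- arXiv:1708.00182 — 4 statements merged into one kernel-verified Lean document; each statement's English description precedes it below -/
import Mathlib

section
/- Let ⫝ be a ternary independence relation on subsets/tuples of a structure satisfying transitivity (a ⫝_{Cd} b and d ⫝_C b imply ad ⫝_C b) and base monotonicity (a ⫝_C bd implies a ⫝_{Cd} b). Suppose tp(a/A) is 'generically simple', meaning for all b, b ⫝_A a implies a ⫝_A b, and similarly tp(a'/A) is generically simple, with a ⫝_A a'. Then the pair (a,a') realizes a generically simple type: for all b, b ⫝_A (a,a') implies (a,a') ⫝_A b. -/
/-- lem_gensimpleprod: for an abstract ternary independence relation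
`Ind x C y` (read "x ⫝_C y"), the product of two independent generically simple
types is generically simple. -/
theorem genSimple_prod {α : Type*} (Ind : Set α → Set α → Set α → Prop)
    -- transitivity: x ⫝_{C∪d} y and d ⫝_C y imply (x,d) ⫝_C y
    (htrans : ∀ x d C y : Set α, Ind x (C ∪ d) y → Ind d C y → Ind (x ∪ d) C y)
    -- base monotonicity: x ⫝_C (y,d) implies x ⫝_{C∪d} y
    (hbase : ∀ x C y d : Set α, Ind x C (y ∪ d) → Ind x (C ∪ d) y)
    -- monotonicity on both sides
    (hmonoR : ∀ x C y y' : Set α, y' ⊆ y → Ind x C y → Ind x C y')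
    (hmonoL : ∀ x x' C y : Set α, x' ⊆ x → Ind x C y → Ind x' C y)
    (A a a' : Set α)
    -- tp(a/A) is generically simple
    (hgs : ∀ b : Set α, Ind b A a → Ind a A b)
    -- tp(a'/A) is generically simple
    (hgs' : ∀ b : Set α, Ind b A a' → Ind a' A b)
    -- a ⫝_A a'
    (haa' : Ind a A a') :
    -- the pair (a,a') realizes a generically simple type
    ∀ b : Set α, Ind b A (a ∪ a') → Ind (a ∪ a') A b := by
  intro b hb
  -- a' ⫝_A b
  have h1 : Ind a' A b := hgs' b (hmonoR b A (a ∪ a') a' Set.subset_union_right hb)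
  -- a' ⫝_A a
  have h2 : Ind a' A a := hgs' a haa'
  -- b ⫝_{A ∪ a'} a
  have h3 : Ind b (A ∪ a') a := hbase b A a a' hb
  -- (b ∪ a') ⫝_A a
  have h4 : Ind (b ∪ a') A a := htrans b a' A a h3 h2
  -- a ⫝_A (b ∪ a')
  have h5 : Ind a A (b ∪ a') := hgs (b ∪ a') h4
  -- a ⫝_{A ∪ a'} b
  have h6 : Ind a (A ∪ a') b := hbase a A b a' h5
  exact htrans a a' A b h6 h1
end

section
/- With an abstract independence relation ⫝ satisfying transitivity, base monotonicity and monotonicity: if tp(a/A) is generically simple and tp(b/A∪{a}) is generically simple, then tp((a,b)/A) is generically simple, i.e., for every c, c ⫝_A (a,b) implies (a,b) ⫝_A c. -/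
/-- lem_descent: for an abstract ternary independence relation
`Ind x C y` (read "x ⫝_C y"): if tp(a/A) is generically simple and tp(b/A∪a) is
generically simple, then tp((a,b)/A) is generically simple. -/
theorem genSimple_descent {α : Type*} (Ind : Set α → Set α → Set α → Prop)
    -- transitivity: x ⫝_{C∪d} y and d ⫝_C y imply (x,d) ⫝_C y
    (htrans : ∀ x d C y : Set α, Ind x (C ∪ d) y → Ind d C y → Ind (x ∪ d) C y)
    -- base monotonicity
    (hbase : ∀ x C y d : Set α, Ind x C (y ∪ d) → Ind x (C ∪ d) y)
    -- monotonicity on both sides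
    (hmonoR : ∀ x C y y' : Set α, y' ⊆ y → Ind x C y → Ind x C y')
    (hmonoL : ∀ x x' C y : Set α, x' ⊆ x → Ind x C y → Ind x' C y)
    (A a b : Set α)
    -- tp(a/A) is generically simple
    (hgs : ∀ c : Set α, Ind c A a → Ind a A c)
    -- tp(b/A∪a) is generically simple
    (hgsb : ∀ c : Set α, Ind c (A ∪ a) b → Ind b (A ∪ a) c) :
    ∀ c : Set α, Ind c A (a ∪ b) → Ind (a ∪ b) A c := by
  intro c hc
  have hca : Ind c A a := hmonoR _ _ _ _ (Set.subset_union_left) hc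
  have hac : Ind a A c := hgs c hca
  have hcb : Ind c (A ∪ a) b := hbase _ _ _ _ (hmonoR _ _ _ _ (by intro x hx; rcases hx with h | h; exacts [Or.inr h, Or.inl h]) hc)
  have hbc : Ind b (A ∪ a) c := hgsb c hcb
  have := htrans b a A c hbc hac
  exact hmonoL _ _ _ _ (by intro x hx; rcases hx with h | h; exacts [Or.inr h, Or.inl h]) this
end

section
/- Let μ be an M-invariant Keisler measure on a definable set D over the monster model of any theory. Then the ideal I_μ = {definable X ⊆ D : μ(X) = 0} is an M-invariant S1 ideal: for any M-indiscernible sequence (a_i : i < ω) and formula φ(x;y), if μ(φ(x;a_0)) > 0 then μ(φ(x;a_0) ∧ φ(x;a_1)) > 0. -/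
/-- the zero ideal of an M-invariant Keisler measure μ on a
definable set D is S1: for any M-indiscernible sequence (a_i) and formula φ(x;y),
μ(φ(x;a_0)) > 0 implies μ(φ(x;a_0) ∧ φ(x;a_1)) > 0. -/
theorem keisler_measure_S1 {α : Type*}
    (μ : Set α → ℝ)                         -- the Keisler measure on definable sets
    (D : Set α)                             -- the ambient definable set
    (Indisc : Set α → (ℕ → Set α) → Prop)   -- M-indiscernible sequences
    (M : Set α)
    -- μ is a finitely additive probability measure on definable subsets of D
    (hnonneg : ∀ X : Set α, 0 ≤ μ X)
    (hD : μ D = 1)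
    (hadd : ∀ X Y : Set α, X ⊆ D → Y ⊆ D → Disjoint X Y → μ (X ∪ Y) = μ X + μ Y)
    (hmono : ∀ X Y : Set α, X ⊆ Y → Y ⊆ D → μ X ≤ μ Y)
    -- M-invariance of μ along M-indiscernible sequences: measures of conjunctions
    -- depend only on the number of parameters used
    (hinv : ∀ (ψ : Set α → Set α) (g : ℕ → Set α), Indisc M g →
      ∀ s t : Finset ℕ, s.card = t.card →
        μ (⋂ i ∈ s, ψ (g i)) = μ (⋂ i ∈ t, ψ (g i)))
    (hsubseq : ∀ g : ℕ → Set α, Indisc M g → ∀ k : ℕ → ℕ, StrictMono k → Indisc M (g ∘ k))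
    (φ : Set α → Set α) (a : ℕ → Set α) (hind : Indisc M a)
    (hsub : ∀ i : ℕ, φ (a i) ⊆ D)
    (hpos : 0 < μ (φ (a 0))) :
    0 < μ (φ (a 0) ∩ φ (a 1)) := by
  by_contra hcon
  push_neg at hcon
  have h0 : μ (φ (a 0) ∩ φ (a 1)) = 0 := le_antisymm hcon (hnonneg _)
  set ε := μ (φ (a 0)) with hε
  have hempty : μ (∅ : Set α) = 0 := by
    have := hadd ∅ ∅ (by simp) (by simp) (by simp)
    simp at this; linarith
  have union_eq : ∀ X Y : Set α, X ⊆ D → Y ⊆ D →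
      μ (X ∪ Y) = μ X + μ Y - μ (X ∩ Y) := by
    intro X Y hX hY
    have h1 : μ Y = μ (Y \ X) + μ (X ∩ Y) := by
      have := hadd (Y \ X) (X ∩ Y) (fun x hx => hY hx.1) (fun x hx => hY hx.2)
        (by rw [Set.disjoint_left]; intro x hx hx'; exact hx.2 hx'.1)
      rw [← this]
      congr 1
      ext x; simp; tauto
    have h2 : μ (X ∪ Y) = μ X + μ (Y \ X) := by
      have := hadd X (Y \ X) hX (fun x hx => hY hx.1)
        (by rw [Set.disjoint_left]; intro x hx hx'; exact hx'.2 hx)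
      rw [← this]; congr 1; ext x; simp
    linarith
  have heq : ∀ i : ℕ, μ (φ (a i)) = ε := by
    intro i
    have := hinv φ a hind {i} {0} (by simp)
    simpa using this
  have hpair : ∀ i j : ℕ, i ≠ j → μ (φ (a i) ∩ φ (a j)) = 0 := by
    intro i j hij
    have hc : ({i, j} : Finset ℕ).card = ({0, 1} : Finset ℕ).card := by
      rw [Finset.card_insert_of_notMem (by simpa using hij)]
      simp
    have := hinv φ a hind {i, j} {0, 1} hc
    simpa [Finset.set_biInter_insert, h0] using this
  have hzero_union : ∀ (s : Finset ℕ) (B : ℕ → Set α), (∀ i, B i ⊆ D) →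
      (∀ i ∈ s, μ (B i) = 0) → μ (⋃ i ∈ s, B i) = 0 := by
    intro s
    induction s using Finset.induction with
    | empty => intro B _ _; simpa using hempty
    | @insert x s hx ih =>
      intro B hBD hB0
      have hUD : (⋃ i ∈ s, B i) ⊆ D := Set.iUnion₂_subset fun i _ => hBD i
      rw [Finset.set_biUnion_insert, union_eq _ _ (hBD x) hUD]
      have h1 := ih B hBD (fun i hi => hB0 i (Finset.mem_insert_of_mem hi))
      have h2 := hB0 x (Finset.mem_insert_self x s)
      have h3 : μ (B x ∩ ⋃ i ∈ s, B i) ≤ 0 := by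
        calc μ (B x ∩ ⋃ i ∈ s, B i) ≤ μ (B x) := hmono _ _ Set.inter_subset_left (hBD x)
        _ = 0 := h2
      have h4 := hnonneg (B x ∩ ⋃ i ∈ s, B i)
      linarith
  have hU : ∀ n : ℕ, (n : ℝ) * ε ≤ μ (⋃ i ∈ Finset.range n, φ (a i)) := by
    intro n
    induction n with
    | zero => simp [hempty]
    | succ n ih =>
      have hUD : (⋃ i ∈ Finset.range n, φ (a i)) ⊆ D := Set.iUnion₂_subset fun i _ => hsub i
      rw [Finset.range_add_one, Finset.set_biUnion_insert, union_eq _ _ (hsub n) hUD]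
      have hint : μ (φ (a n) ∩ ⋃ i ∈ Finset.range n, φ (a i)) = 0 := by
        have hrw : φ (a n) ∩ (⋃ i ∈ Finset.range n, φ (a i))
            = ⋃ i ∈ Finset.range n, (φ (a n) ∩ φ (a i)) := by
          ext x; simp
        rw [hrw]
        exact hzero_union _ _ (fun i => Set.inter_subset_right.trans (hsub i))
          (fun i hi => hpair n i (by simp at hi; omega))
      push_cast
      rw [heq n]
      linarith
  obtain ⟨n, hn⟩ := exists_nat_gt (1 / ε)
  have hUD : (⋃ i ∈ Finset.range n, φ (a i)) ⊆ D := Set.iUnion₂_subset fun i _ => hsub i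
  have h1 : μ (⋃ i ∈ Finset.range n, φ (a i)) ≤ 1 := hD ▸ hmono _ D hUD subset_rfl
  have h2 : (1 : ℝ) < n * ε := (div_lt_iff₀ hpos).mp hn
  have := hU n
  linarith
end

section
/- With an abstract independence relation ⫝ satisfying monotonicity and the extension property over extension bases: if tp(a/A) is generically simple and b ∈ dcl(A∪{a}) (b is a definable function of a over A), then tp(b/A) is generically simple: for all c, c ⫝_A b implies b ⫝_A c. -/
/-- lem_gensimpledcl: if tp(a/A) is generically simple and
b ∈ dcl(A∪a), then tp(b/A) is generically simple. `InDcl X y` means that the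
tuple y lies in dcl(X). -/
theorem genSimple_dcl {α : Type*}
    (Ind : Set α → Set α → Set α → Prop)   -- Ind x C y : x ⫝_C y
    (EqTp : Set α → Set α → Set α → Prop)  -- EqTp C x y : x ≡_C y
    (InDcl : Set α → Set α → Prop)
    (A a b : Set α)
    -- monotonicity on both sides
    (hmonoR : ∀ x C y y' : Set α, y' ⊆ y → Ind x C y → Ind x C y')
    (hmonoL : ∀ x x' C y : Set α, x' ⊆ x → Ind x C y → Ind x' C y)
    -- Ind is invariant under A-definable functions: monotonicity through dcl
    (hdclR : ∀ x C y y' : Set α, InDcl (C ∪ y) y' → Ind x C y → Ind x C y')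
    (hdclL : ∀ x x' C y : Set α, InDcl (C ∪ x) x' → Ind x C y → Ind x' C y)
    -- right extension over the extension base A: a nonforking extension of
    -- tp(c/A∪b) to A∪a
    (hext : ∀ c : Set α, Ind c A b → ∃ c' : Set α, EqTp (A ∪ b) c' c ∧ Ind c' A (b ∪ a))
    -- invariance of Ind under equality of types over A∪b
    (hEq : ∀ x y : Set α, EqTp (A ∪ b) x y → (Ind b A x ↔ Ind b A y))
    -- tp(a/A) is generically simple
    (hgs : ∀ d : Set α, Ind d A a → Ind a A d)
    -- b ∈ dcl(A∪a)
    (hb : InDcl (A ∪ a) b) :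
    ∀ c : Set α, Ind c A b → Ind b A c := by
  intro c hcb
  obtain ⟨c', hEqc, hc'⟩ := hext c hcb
  have hca : Ind c' A a := hmonoR _ _ _ _ (Set.subset_union_right) hc'
  have hac : Ind a A c' := hgs _ hca
  have hbc : Ind b A c' := hdclL _ _ _ _ hb hac
  exact (hEq _ _ hEqc).mp hbc
end
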